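/- There exists a positive constant c (depending only on R, λmin, λmax) such that for all Borel probability measures P, P' on ℝ supported in [−R, R] and all scales σ, σ' ∈ [λmin, λmax], one has ∫_ℝ |p_{P,σ}(x) − p_{P',σ'}(x)| dx ≥ c · |σ − σ'|. -/

import Mathlib

open MeasureTheory

noncomputable section

/-- The univariate Laplace kernel with location θ and scale σ. -/
noncomputable def laplaceKer (θ σ x : ℝ) : ℝ :=
  (Real.sqrt (2 * σ))⁻¹ * Real.exp (-(Real.sqrt (2 / σ) * |x - θ|))

/-- Laplace mixture density. -/
noncomputable def laplaceMix (P : Measure ℝ) (σ : ℝ) : ℝ → ℝ :=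
  fun x => ∫ θ, laplaceKer θ σ x ∂P

/-!
With rate `A = √(2/σ)` the kernel is `(A/2) e^{-A|x-θ|}`, so to the right of the support of
`P` every mixture has an exponential tail: `∫_{x>R+s} p_{P,σ} = e^{-As} ∫_{x>R} p_{P,σ}` for
`s ≥ 0`. The tail masses at `R` and `R + 1` of two mixtures each differ by at most `‖p - p'‖₁`,
which forces `|e^{-A} - e^{-A'}| · ∫_{x>R} p_{P,σ} ≤ 2 ‖p - p'‖₁`. The tail at `R` is at least
`e^{-2AR}/2`, and on `[λmin, λmax]` the maps `σ ↦ A` and `A ↦ e^{-A}` have derivatives bounded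
away from zero, which turns this into a lower bound linear in `|σ - σ'|`.
-/

open Real Set

def laplaceRate (σ : ℝ) : ℝ := √(2 / σ)

lemma laplaceRate_pos {σ : ℝ} (hσ : 0 < σ) : 0 < laplaceRate σ :=
  sqrt_pos.2 (by positivity)

lemma laplaceRate_sq {σ : ℝ} (hσ : 0 ≤ σ) : laplaceRate σ ^ 2 = 2 / σ :=
  sq_sqrt (by positivity)

lemma laplaceRate_le_laplaceRate {σ τ : ℝ} (hσ : 0 < σ) (h : σ ≤ τ) :
    laplaceRate τ ≤ laplaceRate σ :=
  sqrt_le_sqrt (div_le_div_of_nonneg_left zero_le_two hσ h)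

lemma laplaceKer_eq (θ σ x : ℝ) :
    laplaceKer θ σ x = laplaceRate σ / 2 * exp (-(laplaceRate σ * |x - θ|)) := by
  have h : (√(2 * σ))⁻¹ = √(2 / σ) / 2 := by
    rw [← sqrt_inv, show (2 * σ)⁻¹ = 2 / σ / 2 ^ 2 by field_simp,
      sqrt_div' _ (by positivity), sqrt_sq zero_le_two]
  rw [laplaceKer, h, laplaceRate]

lemma laplaceKer_nonneg (θ σ x : ℝ) : 0 ≤ laplaceKer θ σ x := by
  unfold laplaceKer; positivity

lemma continuous_laplaceKer_uncurry (σ : ℝ) :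
    Continuous fun p : ℝ × ℝ => laplaceKer p.2 σ p.1 := by
  unfold laplaceKer; fun_prop

lemma integrable_exp_neg_mul_abs {a : ℝ} (ha : 0 < a) :
    Integrable fun x : ℝ => exp (-(a * |x|)) := by
  rw [← integrableOn_univ, ← Iic_union_Ioi (a := 0), integrableOn_union]
  constructor
  · refine (integrableOn_exp_mul_Iic ha 0).congr_fun (fun x hx => ?_) measurableSet_Iic
    rw [abs_of_nonpos (mem_Iic.1 hx), mul_neg, neg_neg]
  · refine (integrableOn_exp_mul_Ioi (neg_neg_of_pos ha) 0).congr_fun (fun x hx => ?_)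
      measurableSet_Ioi
    simp only [abs_of_pos (mem_Ioi.1 hx), neg_mul]

lemma integrable_laplaceKer {σ : ℝ} (hσ : 0 < σ) (θ : ℝ) :
    Integrable fun x => laplaceKer θ σ x := by
  simp_rw [laplaceKer_eq]
  exact ((integrable_exp_neg_mul_abs (laplaceRate_pos hσ)).comp_sub_right θ).const_mul _

lemma integral_laplaceKer_eq_integral_laplaceKer_zero (θ σ : ℝ) :
    ∫ x, laplaceKer θ σ x = ∫ x, laplaceKer 0 σ x := by
  simpa only [laplaceKer, sub_zero] using integral_sub_right_eq_self (laplaceKer 0 σ) θ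

lemma integrable_laplaceKer_prod {σ : ℝ} (hσ : 0 < σ) (P : Measure ℝ) [IsFiniteMeasure P] :
    Integrable (fun p : ℝ × ℝ => laplaceKer p.2 σ p.1) (volume.prod P) := by
  rw [integrable_prod_iff' (continuous_laplaceKer_uncurry σ).aestronglyMeasurable]
  refine ⟨ae_of_all _ (integrable_laplaceKer hσ), ?_⟩
  simp only [norm_of_nonneg (laplaceKer_nonneg _ _ _),
    integral_laplaceKer_eq_integral_laplaceKer_zero _ σ]
  exact integrable_const _

lemma integrable_laplaceMix {σ : ℝ} (hσ : 0 < σ) (P : Measure ℝ) [IsFiniteMeasure P] :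
    Integrable (laplaceMix P σ) :=
  (integrable_laplaceKer_prod hσ P).integral_prod_left

lemma setIntegral_Ioi_laplaceKer {σ θ T : ℝ} (hσ : 0 < σ) (hθ : θ ≤ T) :
    ∫ x in Ioi T, laplaceKer θ σ x = exp (-(laplaceRate σ * (T - θ))) / 2 := by
  simp_rw [laplaceKer_eq]
  set A := laplaceRate σ
  have hA : 0 < A := laplaceRate_pos hσ
  have hcongr : EqOn (fun x => A / 2 * exp (-(A * |x - θ|)))
      (fun x => A / 2 * exp (A * θ) * exp (-A * x)) (Ioi T) := by
    intro x hx
    dsimp only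
    rw [abs_of_nonneg (by linarith [mem_Ioi.1 hx]), mul_assoc, ← exp_add]
    ring_nf
  rw [setIntegral_congr_fun measurableSet_Ioi hcongr, integral_const_mul,
    integral_exp_mul_Ioi (neg_neg_of_pos hA)]
  rw [show -(A * (T - θ)) = A * θ + -A * T by ring, exp_add]
  field_simp

lemma setIntegral_Ioi_laplaceMix {σ T : ℝ} (hσ : 0 < σ) {P : Measure ℝ} [IsFiniteMeasure P]
    (hP : ∀ᵐ θ ∂P, θ ≤ T) :
    ∫ x in Ioi T, laplaceMix P σ x
      = exp (-(laplaceRate σ * T)) / 2 * ∫ θ, exp (laplaceRate σ * θ) ∂P := by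
  have hK := (integrable_laplaceKer_prod hσ P).restrict (s := Ioi T ×ˢ univ)
  rw [← Measure.prod_restrict, Measure.restrict_univ] at hK
  unfold laplaceMix
  rw [integral_integral_swap hK, ← integral_const_mul]
  refine integral_congr_ae (hP.mono fun θ hθ => ?_)
  dsimp only
  rw [setIntegral_Ioi_laplaceKer hσ hθ, mul_sub, sub_eq_add_neg, neg_add, exp_add]
  ring_nf

lemma setIntegral_Ioi_add_laplaceMix {σ T s : ℝ} (hσ : 0 < σ) {P : Measure ℝ}
    [IsFiniteMeasure P] (hP : ∀ᵐ θ ∂P, θ ≤ T) (hs : 0 ≤ s) :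
    ∫ x in Ioi (T + s), laplaceMix P σ x
      = exp (-(laplaceRate σ * s)) * ∫ x in Ioi T, laplaceMix P σ x := by
  rw [setIntegral_Ioi_laplaceMix hσ (hP.mono fun θ hθ => by linarith),
    setIntegral_Ioi_laplaceMix hσ hP, mul_add, neg_add, exp_add]
  ring

lemma exp_neg_mul_le_integral_exp_mul {a R : ℝ} (ha : 0 ≤ a) {P : Measure ℝ}
    [IsProbabilityMeasure P] (hP : ∀ᵐ θ ∂P, θ ∈ Icc (-R) R) :
    exp (-(a * R)) ≤ ∫ θ, exp (a * θ) ∂P := by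
  have hint : Integrable (fun θ => exp (a * θ)) P := by
    refine .of_bound (by fun_prop) (exp (a * R)) (hP.mono fun θ hθ => ?_)
    rw [norm_of_nonneg (exp_nonneg _), exp_le_exp]
    exact mul_le_mul_of_nonneg_left hθ.2 ha
  calc exp (-(a * R)) = ∫ _, exp (-(a * R)) ∂P := by simp
    _ ≤ ∫ θ, exp (a * θ) ∂P := integral_mono_ae (integrable_const _) hint <|
        hP.mono fun θ hθ => exp_le_exp.2 (by nlinarith [hθ.1])

lemma exp_neg_two_mul_le_setIntegral_Ioi_laplaceMix {σ R : ℝ} (hσ : 0 < σ) {P : Measure ℝ}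
    [IsProbabilityMeasure P] (hP : ∀ᵐ θ ∂P, θ ∈ Icc (-R) R) :
    exp (-(2 * laplaceRate σ * R)) / 2 ≤ ∫ x in Ioi R, laplaceMix P σ x := by
  rw [setIntegral_Ioi_laplaceMix hσ (hP.mono fun θ hθ => hθ.2),
    show -(2 * laplaceRate σ * R) = -(laplaceRate σ * R) + -(laplaceRate σ * R) by ring,
    exp_add, mul_div_right_comm]
  gcongr
  exact exp_neg_mul_le_integral_exp_mul (laplaceRate_pos hσ).le hP

lemma abs_setIntegral_sub_le_integral_abs_sub {α : Type*} [MeasurableSpace α] {μ : Measure α}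
    {f g : α → ℝ} (hf : Integrable f μ) (hg : Integrable g μ) (s : Set α) :
    |∫ x in s, f x ∂μ - ∫ x in s, g x ∂μ| ≤ ∫ x, |f x - g x| ∂μ := by
  rw [← integral_sub hf.integrableOn hg.integrableOn]
  exact abs_integral_le_integral_abs.trans <|
    setIntegral_le_integral (hf.sub hg).abs (ae_of_all _ fun _ => abs_nonneg _)

lemma abs_sub_mul_abs_le_two_mul {u u' t t' ε : ℝ} (hu' : |u'| ≤ 1)
    (h₁ : |u * t - u' * t'| ≤ ε) (h₂ : |t - t'| ≤ ε) : |u - u'| * |t| ≤ 2 * ε := by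
  have hε : 0 ≤ ε := (abs_nonneg _).trans h₂
  calc |u - u'| * |t| = |(u * t - u' * t') + u' * (t' - t)| := by rw [← abs_mul]; ring_nf
    _ ≤ |u * t - u' * t'| + |u'| * |t' - t| := by rw [← abs_mul]; exact abs_add_le _ _
    _ ≤ ε + 1 * ε := by rw [abs_sub_comm t']; gcongr
    _ = 2 * ε := by ring

lemma abs_exp_neg_laplaceRate_sub_mul_le {σ σ' T : ℝ} (hσ : 0 < σ) (hσ' : 0 < σ')
    {P P' : Measure ℝ} [IsFiniteMeasure P] [IsFiniteMeasure P'] (hP : ∀ᵐ θ ∂P, θ ≤ T)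
    (hP' : ∀ᵐ θ ∂P', θ ≤ T) :
    |exp (-laplaceRate σ) - exp (-laplaceRate σ')| * ∫ x in Ioi T, laplaceMix P σ x
      ≤ 2 * ∫ x, |laplaceMix P σ x - laplaceMix P' σ' x| := by
  have hint := integrable_laplaceMix hσ P
  have hint' := integrable_laplaceMix hσ' P'
  have h₁ := abs_setIntegral_sub_le_integral_abs_sub hint hint' (Ioi (T + 1))
  rw [setIntegral_Ioi_add_laplaceMix hσ hP zero_le_one,
    setIntegral_Ioi_add_laplaceMix hσ' hP' zero_le_one, mul_one, mul_one] at h₁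
  have h₂ := abs_setIntegral_sub_le_integral_abs_sub hint hint' (Ioi T)
  have hu' : |exp (-laplaceRate σ')| ≤ 1 := by
    rw [abs_of_pos (exp_pos _), exp_le_one_iff, neg_nonpos]
    exact (laplaceRate_pos hσ').le
  have htail : 0 ≤ ∫ x in Ioi T, laplaceMix P σ x :=
    setIntegral_nonneg measurableSet_Ioi fun x _ =>
      integral_nonneg fun θ => laplaceKer_nonneg θ σ x
  simpa only [abs_of_nonneg htail] using abs_sub_mul_abs_le_two_mul hu' h₁ h₂

lemma mul_abs_sub_le_abs_exp_neg_sub_exp_neg {a b m : ℝ} (ha : a ≤ m) (hb : b ≤ m) :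
    exp (-m) * |a - b| ≤ |exp (-a) - exp (-b)| := by
  wlog h : a ≤ b generalizing a b
  · rw [abs_sub_comm, abs_sub_comm (exp _)]
    exact this hb ha (le_of_not_ge h)
  rw [abs_of_nonpos (sub_nonpos.2 h), neg_sub,
    abs_of_nonneg (sub_nonneg.2 (exp_le_exp.2 (neg_le_neg h)))]
  calc exp (-m) * (b - a) ≤ exp (-b) * (b - a) := by gcongr
    _ ≤ exp (-b) * (exp (b - a) - 1) :=
        mul_le_mul_of_nonneg_left (by linarith [add_one_le_exp (b - a)]) (exp_pos _).le
    _ = exp (-a) - exp (-b) := by rw [mul_sub, ← exp_add]; ring_nf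

lemma abs_sub_le_mul_abs_laplaceRate_sub {m M σ σ' : ℝ} (hm : 0 < m) (hσ : σ ∈ Icc m M)
    (hσ' : σ' ∈ Icc m M) :
    |σ - σ'| ≤ M ^ 2 * laplaceRate m * |laplaceRate σ - laplaceRate σ'| := by
  have hσ0 : 0 < σ := hm.trans_le hσ.1
  have hσ'0 : 0 < σ' := hm.trans_le hσ'.1
  have hsq : σ - σ' = σ * σ' * (laplaceRate σ' + laplaceRate σ) / 2
      * (laplaceRate σ' - laplaceRate σ) := by
    have h : (laplaceRate σ' + laplaceRate σ) * (laplaceRate σ' - laplaceRate σ)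
        = 2 / σ' - 2 / σ := by
      rw [← laplaceRate_sq hσ0.le, ← laplaceRate_sq hσ'0.le]; ring
    rw [mul_div_right_comm, mul_assoc, h]
    field_simp
  have hsum : laplaceRate σ' + laplaceRate σ ≤ 2 * laplaceRate m := by
    linarith [laplaceRate_le_laplaceRate hm hσ.1, laplaceRate_le_laplaceRate hm hσ'.1]
  have hsum_nonneg : 0 ≤ laplaceRate σ' + laplaceRate σ := by unfold laplaceRate; positivity
  have hcoef : σ * σ' * (laplaceRate σ' + laplaceRate σ) / 2 ≤ M ^ 2 * laplaceRate m := by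
    have hσσ' : σ * σ' ≤ M * M := mul_le_mul hσ.2 hσ'.2 hσ'0.le (hσ0.le.trans hσ.2)
    nlinarith [mul_le_mul hσσ' hsum hsum_nonneg (by nlinarith)]
  rw [hsq, abs_mul, abs_sub_comm (laplaceRate σ'), abs_of_nonneg (by positivity)]
  gcongr

/-- Univariate Laplace scale separation (Assumption 1 for the Laplace kernel,
univariate case). -/
theorem univariate_laplace_scale_separation
    (R lmin lmax : ℝ) (hR : 0 < R) (hlmin : 0 < lmin) (hl : lmin < lmax) :
    ∃ c : ℝ, 0 < c ∧
      ∀ (P P' : Measure ℝ), IsProbabilityMeasure P → IsProbabilityMeasure P' →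
        P (Set.Icc (-R) R)ᶜ = 0 → P' (Set.Icc (-R) R)ᶜ = 0 →
        ∀ σ ∈ Set.Icc lmin lmax, ∀ σ' ∈ Set.Icc lmin lmax,
          c * |σ - σ'| ≤ ∫ x, |laplaceMix P σ x - laplaceMix P' σ' x| := by
  set a := laplaceRate lmin
  have ha : 0 < a := laplaceRate_pos hlmin
  have hlmax : 0 < lmax := hlmin.trans hl
  refine ⟨exp (-(2 * a * R)) / 2 * exp (-a) / (2 * (lmax ^ 2 * a)), by positivity, ?_⟩
  intro P P' _ _ hP hP' σ hσ σ' hσ'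
  have hσ0 : 0 < σ := hlmin.trans_le hσ.1
  have hsupp : ∀ᵐ θ ∂P, θ ∈ Icc (-R) R := mem_ae_iff.2 hP
  have hsupp' : ∀ᵐ θ ∂P', θ ∈ Icc (-R) R := mem_ae_iff.2 hP'
  have htail : exp (-(2 * a * R)) / 2 ≤ ∫ x in Ioi R, laplaceMix P σ x :=
    le_trans (by gcongr; exact laplaceRate_le_laplaceRate hlmin hσ.1)
      (exp_neg_two_mul_le_setIntegral_Ioi_laplaceMix hσ0 hsupp)
  have htail_nonneg : 0 ≤ ∫ x in Ioi R, laplaceMix P σ x :=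
    le_trans (by positivity) htail
  have hsep := abs_exp_neg_laplaceRate_sub_mul_le hσ0 (hlmin.trans_le hσ'.1)
    (hsupp.mono fun _ h => h.2) (hsupp'.mono fun _ h => h.2)
  have hexp := mul_abs_sub_le_abs_exp_neg_sub_exp_neg
    (laplaceRate_le_laplaceRate hlmin hσ.1) (laplaceRate_le_laplaceRate hlmin hσ'.1)
  calc exp (-(2 * a * R)) / 2 * exp (-a) / (2 * (lmax ^ 2 * a)) * |σ - σ'|
      ≤ exp (-(2 * a * R)) / 2 * exp (-a) / (2 * (lmax ^ 2 * a))
          * (lmax ^ 2 * a * |laplaceRate σ - laplaceRate σ'|) := by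
        gcongr; exact abs_sub_le_mul_abs_laplaceRate_sub hlmin hσ hσ'
    _ = exp (-(2 * a * R)) / 2 * (exp (-a) * |laplaceRate σ - laplaceRate σ'|) / 2 := by
        field_simp
    _ ≤ (∫ x in Ioi R, laplaceMix P σ x)
          * |exp (-laplaceRate σ) - exp (-laplaceRate σ')| / 2 := by
        gcongr
    _ ≤ ∫ x, |laplaceMix P σ x - laplaceMix P' σ' x| := by linarith
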